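/- arXiv:1410.1371 — 7 statements merged into one kernel-verified Lean document; each statement's English description precedes it below -/
import Mathlib

section
/- For every prime power q and every positive integer k, the digraph H_k^q is regular with every vertex having out-degree q^{2(k-1)} − 1 and in-degree q^{2(k-1)} − 1. -/
/-- The standard bilinear form `⟨v,w⟩ = ∑ i, v i * w i` on `F^k`. -/
def bil {k : ℕ} {F : Type} [Field F] (v w : Fin k → F) : F := ∑ i, v i * w i

/-- A vector is *normal* if its first nonzero entry equals `1`. -/
def IsNormal {k : ℕ} {F : Type} [Field F] (v : Fin k → F) : Prop :=
  ∃ i : Fin k, v i = 1 ∧ ∀ j : Fin k, j < i → v j = 0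

/-- The vertex set `W` of the digraph `H_k^q`. -/
def IsHVertex {k : ℕ} {F : Type} [Field F] (p : (Fin k → F) × (Fin k → F)) : Prop :=
  IsNormal p.1 ∧ IsNormal p.2 ∧ bil p.1 p.2 ≠ 0

/-- The vertices of the digraph `H_k^q`. -/
abbrev HVtx (k : ℕ) (F : Type) [Field F] : Type :=
  {p : (Fin k → F) × (Fin k → F) // IsHVertex p}

/-- The (loopless) adjacency of `H_k^q`: there is an edge from the vertex `(v,w)` to a
distinct vertex `(v',w')` iff `⟨v,w'⟩ ≠ 0`. -/
def HAdj {k : ℕ} {F : Type} [Field F] (a b : HVtx k F) : Prop :=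
  a ≠ b ∧ bil a.val.1 b.val.2 ≠ 0

/-! A nonzero functional `⟨u, ·⟩` on `F^k` is nonzero at `(q - 1) q^(k-1)` vectors, and these are
exactly the unit multiples of `q^(k-1)` normal vectors. An out-neighbour `(v', w')` of `(v, w)` is a
normal `w'` with `⟨v, w'⟩ ≠ 0` followed by a normal `v'` with `⟨v', w'⟩ ≠ 0`, giving
`q^(k-1) · q^(k-1)` vertices, one of which is `(v, w)` itself. Swapping the two coordinates turns
in-neighbours into out-neighbours. -/

open Module

theorem Module.Dual.natCard_apply_ne_zero {F V : Type*} [Field F] [Finite F] [AddCommGroup V]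
    [Module F V] [Module.Finite F V] {f : Module.Dual F V} (hf : f ≠ 0) :
    Nat.card {x : V // f x ≠ 0} = (Nat.card F - 1) * Nat.card F ^ (finrank F V - 1) := by
  classical
  have : Finite V := Module.finite_of_finite F
  have hsplit : Nat.card (LinearMap.ker f) + Nat.card {x : V // f x ≠ 0} = Nat.card V := by
    rw [← Nat.card_sum]; exact Nat.card_congr (Equiv.sumCompl fun x => f x = 0)
  rw [Module.natCard_eq_pow_finrank (K := F) (V := LinearMap.ker f),
    Module.natCard_eq_pow_finrank (K := F) (V := V), ← finrank_ker_add_one_of_ne_zero hf] at hsplit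
  rw [← finrank_ker_add_one_of_ne_zero hf, Nat.add_sub_cancel, Nat.sub_one_mul, ← pow_succ',
    ← hsplit, Nat.add_sub_cancel_left]

theorem Nat.card_subtype_and_ne {α : Type*} [Finite α] {P : α → Prop} {a : α} (ha : P a) :
    Nat.card {b // P b ∧ b ≠ a} = Nat.card {b // P b} - 1 :=
  Set.ncard_sdiff_singleton_of_mem (s := {b | P b}) ha

section Normal

variable {k : ℕ} {F : Type} [Field F]

theorem bil_comm (v w : Fin k → F) : bil v w = bil w v := by
  simp only [bil, mul_comm]

theorem ne_zero_left_of_bil_ne_zero {v w : Fin k → F} (h : bil v w ≠ 0) : v ≠ 0 := by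
  rintro rfl; simp [bil] at h

theorem ne_zero_right_of_bil_ne_zero {v w : Fin k → F} (h : bil v w ≠ 0) : w ≠ 0 :=
  ne_zero_left_of_bil_ne_zero (bil_comm v w ▸ h)

theorem exists_isNormal_smul_eq {x : Fin k → F} (hx : x ≠ 0) :
    ∃ (c : Fˣ) (n : Fin k → F), IsNormal n ∧ c • n = x := by
  obtain ⟨i, hi, hmin⟩ := wellFounded_lt.has_min {i | x i ≠ 0} (Function.ne_iff.mp hx)
  refine ⟨Units.mk0 (x i) hi, (x i)⁻¹ • x, ⟨i, inv_mul_cancel₀ hi, fun j hj => ?_⟩, ?_⟩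
  · simp [not_not.mp fun hxj => hmin j hxj hj]
  · simp [Units.smul_def, smul_smul, mul_inv_cancel₀ hi]

theorem IsNormal.eq_one_of_isNormal_smul {n : Fin k → F} {c : Fˣ} (hn : IsNormal n)
    (hcn : IsNormal (c • n)) : c = 1 := by
  obtain ⟨i, hi, hlt⟩ := hn
  obtain ⟨j, hj, hlt'⟩ := hcn
  obtain rfl : i = j := by
    rcases lt_trichotomy i j with h | rfl | h
    · simpa [Units.smul_def, hi] using hlt' i h
    · rfl
    · simp [hlt j h] at hj
  rw [Units.smul_def, Pi.smul_apply, hi, smul_eq_mul, mul_one] at hj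
  exact Units.ext hj

theorem IsNormal.smul_inj {n n' : Fin k → F} {c c' : Fˣ} (hn : IsNormal n) (hn' : IsNormal n')
    (h : c • n = c' • n') : c = c' ∧ n = n' := by
  have hn'_eq : (c'⁻¹ * c) • n = n' := by rw [mul_smul, inv_smul_eq_iff, h]
  obtain hcc' : c'⁻¹ * c = 1 := hn.eq_one_of_isNormal_smul (hn'_eq ▸ hn')
  rw [hcc', one_smul] at hn'_eq
  exact ⟨(inv_mul_eq_one.mp hcc').symm, hn'_eq⟩

noncomputable def unitsSmulIsNormalEquiv (f : Module.Dual F (Fin k → F)) :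
    Fˣ × {n : Fin k → F // IsNormal n ∧ f n ≠ 0} ≃ {x : Fin k → F // f x ≠ 0} :=
  Equiv.ofBijective
    (fun p => ⟨p.1 • p.2.1, by simpa [map_smul, smul_eq_zero_iff_eq] using p.2.2.2⟩) <| by
    refine ⟨fun ⟨c, n, hn⟩ ⟨c', n', hn'⟩ h => ?_, fun ⟨x, hx⟩ => ?_⟩
    · obtain ⟨rfl, rfl⟩ := hn.1.smul_inj hn'.1 (congrArg Subtype.val h)
      rfl
    · obtain ⟨c, n, hn, rfl⟩ := exists_isNormal_smul_eq (x := x) (by rintro rfl; simp at hx)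
      exact ⟨(c, ⟨n, hn, by simpa [map_smul, smul_eq_zero_iff_eq] using hx⟩), rfl⟩

theorem natCard_isNormal_apply_ne_zero [Finite F] {f : Module.Dual F (Fin k → F)} (hf : f ≠ 0) :
    Nat.card {n : Fin k → F // IsNormal n ∧ f n ≠ 0} = Nat.card F ^ (k - 1) := by
  have h := Nat.card_congr (unitsSmulIsNormalEquiv f)
  rw [Nat.card_prod, Nat.card_units, f.natCard_apply_ne_zero hf, finrank_fin_fun] at h
  exact Nat.eq_of_mul_eq_mul_left (Nat.sub_pos_of_lt Finite.one_lt_card) h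

theorem natCard_isNormal_bil_ne_zero [Finite F] {u : Fin k → F} (hu : u ≠ 0) :
    Nat.card {n : Fin k → F // IsNormal n ∧ bil u n ≠ 0} = Nat.card F ^ (k - 1) := by
  classical
  -- `bil u` is definitionally the functional `dotProductEquiv F (Fin k) u`
  exact natCard_isNormal_apply_ne_zero (f := dotProductEquiv F (Fin k) u) (by simpa using hu)

end Normal

section Vertex

variable {k : ℕ} {F : Type} [Field F]

def isHVertexBilSndEquiv (v : Fin k → F) :
    {p : (Fin k → F) × (Fin k → F) // IsHVertex p ∧ bil v p.2 ≠ 0} ≃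
      Σ w : {w : Fin k → F // IsNormal w ∧ bil v w ≠ 0},
        {v' : Fin k → F // IsNormal v' ∧ bil w.1 v' ≠ 0} where
  toFun p := ⟨⟨p.1.2, p.2.1.2.1, p.2.2⟩, ⟨p.1.1, p.2.1.1, bil_comm p.1.1 p.1.2 ▸ p.2.1.2.2⟩⟩
  invFun s := ⟨(s.2.1, s.1.1), ⟨s.2.2.1, s.1.2.1, bil_comm s.1.1 s.2.1 ▸ s.2.2.2⟩, s.1.2.2⟩
  left_inv _ := rfl
  right_inv _ := rfl

theorem natCard_isHVertex_bil_snd_ne_zero [Finite F] {v : Fin k → F} (hv : v ≠ 0) :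
    Nat.card {p : (Fin k → F) × (Fin k → F) // IsHVertex p ∧ bil v p.2 ≠ 0} =
      Nat.card F ^ (2 * (k - 1)) := by
  have := Fintype.ofFinite {w : Fin k → F // IsNormal w ∧ bil v w ≠ 0}
  rw [Nat.card_congr (isHVertexBilSndEquiv v), Nat.card_sigma]
  simp_rw [fun w : {w : Fin k → F // IsNormal w ∧ bil v w ≠ 0} =>
    natCard_isNormal_bil_ne_zero (ne_zero_right_of_bil_ne_zero w.2.2)]
  rw [Finset.sum_const, Finset.card_univ, ← Nat.card_eq_fintype_card,
    natCard_isNormal_bil_ne_zero hv, smul_eq_mul, ← pow_add, two_mul]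

theorem natCard_isHVertex_bil_fst_ne_zero [Finite F] {w : Fin k → F} (hw : w ≠ 0) :
    Nat.card {p : (Fin k → F) × (Fin k → F) // IsHVertex p ∧ bil p.1 w ≠ 0} =
      Nat.card F ^ (2 * (k - 1)) := by
  rw [← natCard_isHVertex_bil_snd_ne_zero hw]
  refine Nat.card_congr ((Equiv.prodComm _ _).subtypeEquiv fun p => ?_)
  simp only [IsHVertex, Equiv.prodComm_apply, Prod.fst_swap, Prod.snd_swap, bil_comm p.1]
  tauto

theorem natCard_hAdj_left [Finite F] (a : HVtx k F) :
    Nat.card {b : HVtx k F // HAdj a b} =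
      Nat.card {p : (Fin k → F) × (Fin k → F) // IsHVertex p ∧ bil a.1.1 p.2 ≠ 0} - 1 := by
  rw [← Nat.card_congr (Equiv.subtypeSubtypeEquivSubtypeInter _ _),
    ← Nat.card_subtype_and_ne (P := fun b : HVtx k F => bil a.1.1 b.1.2 ≠ 0) a.2.2.2]
  exact Nat.card_congr (Equiv.subtypeEquivRight fun b => by rw [HAdj, and_comm, @ne_comm _ a])

theorem natCard_hAdj_right [Finite F] (a : HVtx k F) :
    Nat.card {b : HVtx k F // HAdj b a} =
      Nat.card {p : (Fin k → F) × (Fin k → F) // IsHVertex p ∧ bil p.1 a.1.2 ≠ 0} - 1 := by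
  rw [← Nat.card_congr (Equiv.subtypeSubtypeEquivSubtypeInter _ _),
    ← Nat.card_subtype_and_ne (P := fun b : HVtx k F => bil b.1.1 a.1.2 ≠ 0) a.2.2.2]
  exact Nat.card_congr (Equiv.subtypeEquivRight fun b => by rw [HAdj, and_comm])

end Vertex

theorem Hkq_regular_general (q k : ℕ)
    (F : Type) [Field F] [Fintype F] (hF : Fintype.card F = q) (a : HVtx k F) :
    Nat.card {b : HVtx k F // HAdj a b} = q ^ (2 * (k - 1)) - 1 ∧
    Nat.card {b : HVtx k F // HAdj b a} = q ^ (2 * (k - 1)) - 1 := by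
  have hbil : bil a.1.1 a.1.2 ≠ 0 := a.2.2.2
  rw [← hF, ← Nat.card_eq_fintype_card, natCard_hAdj_left, natCard_hAdj_right,
    natCard_isHVertex_bil_snd_ne_zero (ne_zero_left_of_bil_ne_zero hbil),
    natCard_isHVertex_bil_fst_ne_zero (ne_zero_right_of_bil_ne_zero hbil)]
  exact ⟨rfl, rfl⟩

/-- For every prime power `q` and positive integer `k`, the digraph `H_k^q` is regular:
every vertex has out-degree `q^(2(k-1)) - 1` and in-degree `q^(2(k-1)) - 1`. -/
theorem Hkq_regular (q k : ℕ) (hq : IsPrimePow q) (hk : 0 < k)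
    (F : Type) [Field F] [Fintype F] (hF : Fintype.card F = q) (a : HVtx k F) :
    Nat.card {b : HVtx k F // HAdj a b} = q ^ (2 * (k - 1)) - 1 ∧
    Nat.card {b : HVtx k F // HAdj b a} = q ^ (2 * (k - 1)) - 1 :=
  Hkq_regular_general q k F hF a
end

section
/- For every positive integer k and prime power q, the digraph H_k^q is vertex-transitive: for any two vertices u and v of H_k^q there exists an automorphism of H_k^q mapping u to v. -/
/-- The directional complement of a loopless digraph: for distinct vertices `a, b`,
`(a,b)` is an edge iff it is not an edge of the original digraph. -/
def digraphCompl {V : Type*} (G : V → V → Prop) : V → V → Prop :=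
  fun a b => a ≠ b ∧ ¬ G a b

/-!
The general linear group `GL_k(F)` acts on the vertices by
`A • (v, w) = ([A v], [A⁻ᵀ w])`, where `[x]` is the normal vector on the line through `x`.
Since `⟨A v, A⁻ᵀ w'⟩ = ⟨v, w'⟩` and normalizing only rescales, the action preserves whether
`⟨v, w'⟩` vanishes, so every group element is an automorphism. The action is transitive:
for a vertex `(a, b)` complete `a` to a basis by a basis of the hyperplane `b^⊥`; the matrix
with these columns sends the vertex `(e₀, e₀)` to `(a, b)`.
-/

open Matrix Module

lemma exists_linearIndependent_finCons_of_map_ne_zero {K V : Type*} [Field K] [AddCommGroup V]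
    [Module K V] {n : ℕ} (hV : finrank K V = n + 1) (f : V →ₗ[K] K) {a : V} (ha : f a ≠ 0) :
    ∃ v : Fin n → V, LinearIndependent K (Fin.cons a v : Fin (n + 1) → V) ∧ ∀ i, f (v i) = 0 := by
  have : Module.Finite K V := Module.finite_of_finrank_eq_succ hV
  have hker : finrank K (LinearMap.ker f) = n := by
    have := Module.Dual.finrank_ker_add_one_of_ne_zero (f := f) fun h => ha (by simp [h])
    omega
  obtain ⟨bK⟩ : Nonempty (Basis (Fin n) K (LinearMap.ker f)) := ⟨finBasisOfFinrankEq K _ hker⟩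
  have hv : ∀ i, f (bK i) = 0 := fun i => (bK i).2
  have hspan : Submodule.span K (Set.range fun i => (bK i : V)) ≤ LinearMap.ker f :=
    Submodule.span_le.2 (by rintro _ ⟨i, rfl⟩; exact hv i)
  exact ⟨_, linearIndependent_finCons.2
    ⟨bK.linearIndependent.map' _ (Submodule.ker_subtype _), fun h => ha (hspan h)⟩, hv⟩

lemma Matrix.GeneralLinearGroup.exists_mulVec_single_eq_and_vecMul_eq {F : Type*} [Field F]
    {n : ℕ} {a b : Fin (n + 1) → F} (hab : a ⬝ᵥ b ≠ 0) :
    ∃ A : GL (Fin (n + 1)) F,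
      A.val *ᵥ Pi.single 0 1 = a ∧ b ᵥ* A.val = (a ⬝ᵥ b) • Pi.single 0 1 := by
  obtain ⟨v, hli, hv⟩ := exists_linearIndependent_finCons_of_map_ne_zero
    (Module.finrank_fin_fun F) ((dotProductBilin F F).flip b) (a := a) hab
  set M : Matrix (Fin (n + 1)) (Fin (n + 1)) F := (Matrix.of (Fin.cons a v))ᵀ
  have hM : IsUnit M := linearIndependent_cols_iff_isUnit.1 hli
  refine ⟨hM.unit, ?_, ?_⟩
  · rw [IsUnit.unit_spec, mulVec_single_one]
    rfl
  · rw [IsUnit.unit_spec, vecMul_transpose]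
    funext j
    refine Fin.cases ?_ (fun i => ?_) j
    · simp [mulVec]
    · simpa [mulVec, dotProduct_comm] using hv i

section NormalRep

variable {k : ℕ} {F : Type} [Field F]

lemma bil_eq_dotProduct (v w : Fin k → F) : bil v w = v ⬝ᵥ w := rfl

lemma IsNormal.ne_zero {x : Fin k → F} (hx : IsNormal x) : x ≠ 0 := by
  rintro rfl
  obtain ⟨i, hi, -⟩ := hx
  exact zero_ne_one hi

lemma IsNormal.eq_one_of_smul {x : Fin k → F} {c : F} (hx : IsNormal x)
    (hcx : IsNormal (c • x)) : c = 1 := by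
  obtain ⟨i, hi, hxi⟩ := hx
  obtain ⟨j, hj, hcxj⟩ := hcx
  simp only [Pi.smul_apply, smul_eq_mul] at hj hcxj
  rcases lt_trichotomy i j with hij | rfl | hji
  · have hc : c = 0 := by simpa [hi] using hcxj i hij
    simp [hc] at hj
  · simpa [hi] using hj
  · simp [hxi j hji] at hj

lemma isNormal_single_zero (n : ℕ) : IsNormal (Pi.single 0 1 : Fin (n + 1) → F) :=
  ⟨0, by simp, fun j hj => absurd hj (Fin.not_lt_zero j)⟩

lemma exists_isNormal_smul {x : Fin k → F} (hx : x ≠ 0) : ∃ c : F, c ≠ 0 ∧ IsNormal (c • x) := by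
  classical
  have h : ∃ i, x i ≠ 0 := by
    by_contra! h
    exact hx (funext h)
  refine ⟨(x (Fin.find _ h))⁻¹, inv_ne_zero (Fin.find_spec h), Fin.find _ h, ?_, fun j hj => ?_⟩
  · simp [Fin.find_spec h]
  · simp [not_not.1 (Fin.find_min h hj)]

open Classical in
noncomputable def normalRep (x : Fin k → F) : Fin k → F :=
  if hx : x = 0 then 0 else (exists_isNormal_smul hx).choose • x

lemma exists_normalRep_eq_smul (x : Fin k → F) : ∃ c : F, c ≠ 0 ∧ normalRep x = c • x := by
  by_cases hx : x = 0
  · exact ⟨1, one_ne_zero, by simp [normalRep, hx]⟩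
  · exact ⟨_, (exists_isNormal_smul hx).choose_spec.1, dif_neg hx⟩

lemma isNormal_normalRep {x : Fin k → F} (hx : x ≠ 0) : IsNormal (normalRep x) := by
  rw [normalRep, dif_neg hx]
  exact (exists_isNormal_smul hx).choose_spec.2

lemma normalRep_of_isNormal {x : Fin k → F} (hx : IsNormal x) : normalRep x = x := by
  obtain ⟨c, -, hc⟩ := exists_normalRep_eq_smul x
  have hcx := isNormal_normalRep hx.ne_zero
  rw [hc] at hcx ⊢
  rw [hx.eq_one_of_smul hcx, one_smul]

lemma normalRep_smul {c : F} (hc : c ≠ 0) (x : Fin k → F) : normalRep (c • x) = normalRep x := by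
  by_cases hx : x = 0
  · simp [hx]
  obtain ⟨d, -, hd⟩ := exists_normalRep_eq_smul (c • x)
  obtain ⟨e, he, hex⟩ := exists_normalRep_eq_smul x
  have hrescale : normalRep (c • x) = (d * c / e) • normalRep x := by
    rw [hd, hex, smul_smul, smul_smul, div_mul_cancel₀ _ he]
  have hN := isNormal_normalRep (smul_ne_zero hc hx)
  rw [hrescale] at hN ⊢
  rw [(isNormal_normalRep hx).eq_one_of_smul hN, one_smul]

lemma normalRep_mulVec_normalRep (M : Matrix (Fin k) (Fin k) F) (x : Fin k → F) :
    normalRep (M *ᵥ normalRep x) = normalRep (M *ᵥ x) := by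
  obtain ⟨c, hc, hcx⟩ := exists_normalRep_eq_smul x
  rw [hcx, mulVec_smul, normalRep_smul hc]

lemma normalRep_normalRep_vecMul (M : Matrix (Fin k) (Fin k) F) (x : Fin k → F) :
    normalRep (normalRep x ᵥ* M) = normalRep (x ᵥ* M) := by
  obtain ⟨c, hc, hcx⟩ := exists_normalRep_eq_smul x
  rw [hcx, smul_vecMul, normalRep_smul hc]

lemma normalRep_dotProduct_normalRep_eq_zero_iff (x y : Fin k → F) :
    normalRep x ⬝ᵥ normalRep y = 0 ↔ x ⬝ᵥ y = 0 := by
  obtain ⟨c, hc, hcx⟩ := exists_normalRep_eq_smul x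
  obtain ⟨d, hd, hdy⟩ := exists_normalRep_eq_smul y
  simp [hcx, hdy, hc, hd]

end NormalRep

lemma Matrix.GeneralLinearGroup.mulVec_dotProduct_vecMul_inv {n R : Type*} [Fintype n]
    [DecidableEq n] [CommRing R] (A : GL n R) (v w : n → R) :
    (A.val *ᵥ v) ⬝ᵥ (w ᵥ* A⁻¹.val) = v ⬝ᵥ w := by
  rw [dotProduct_comm, dotProduct_mulVec, vecMul_vecMul, Units.inv_mul, vecMul_one,
    dotProduct_comm]

namespace HVtx

variable {k : ℕ} {F : Type} [Field F]

lemma isHVertex_smul (A : GL (Fin k) F) (p : HVtx k F) :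
    IsHVertex (normalRep (A.val *ᵥ p.1.1), normalRep (p.1.2 ᵥ* A⁻¹.val)) := by
  obtain ⟨h₁, h₂, h₃⟩ := p.2
  refine ⟨isNormal_normalRep ?_, isNormal_normalRep ?_, ?_⟩
  · exact fun h => h₁.ne_zero <|
      mulVec_injective_iff_isUnit.2 A.isUnit (h.trans (mulVec_zero _).symm)
  · exact fun h => h₂.ne_zero <|
      vecMul_injective_iff_isUnit.2 A⁻¹.isUnit (h.trans (zero_vecMul _).symm)
  · rwa [bil_eq_dotProduct, Ne, normalRep_dotProduct_normalRep_eq_zero_iff,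
      GeneralLinearGroup.mulVec_dotProduct_vecMul_inv]

noncomputable instance : SMul (GL (Fin k) F) (HVtx k F) where
  smul A p := ⟨_, isHVertex_smul A p⟩

lemma val_smul (A : GL (Fin k) F) (p : HVtx k F) :
    (A • p).1 = (normalRep (A.val *ᵥ p.1.1), normalRep (p.1.2 ᵥ* A⁻¹.val)) := rfl

noncomputable instance : MulAction (GL (Fin k) F) (HVtx k F) where
  one_smul p := Subtype.ext <| Prod.ext
    (by simp [val_smul, normalRep_of_isNormal p.2.1])
    (by simp [val_smul, normalRep_of_isNormal p.2.2.1])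
  mul_smul A B p := Subtype.ext <| Prod.ext
    (by simp [val_smul, normalRep_mulVec_normalRep, mulVec_mulVec])
    (by simp [val_smul, normalRep_normalRep_vecMul, vecMul_vecMul])

lemma hAdj_smul_iff (A : GL (Fin k) F) (x y : HVtx k F) : HAdj (A • x) (A • y) ↔ HAdj x y := by
  simp only [HAdj, ne_eq, smul_left_cancel_iff, val_smul, bil_eq_dotProduct,
    normalRep_dotProduct_normalRep_eq_zero_iff, GeneralLinearGroup.mulVec_dotProduct_vecMul_inv]

def basePoint (n : ℕ) : HVtx (n + 1) F :=
  ⟨(Pi.single 0 1, Pi.single 0 1), isNormal_single_zero n, isNormal_single_zero n, by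
    simp [bil_eq_dotProduct]⟩

lemma exists_smul_basePoint_eq {n : ℕ} (p : HVtx (n + 1) F) :
    ∃ A : GL (Fin (n + 1)) F, A • basePoint n = p := by
  obtain ⟨h₁, h₂, h₃⟩ := p.2
  obtain ⟨A, hA₁, hA₂⟩ := GeneralLinearGroup.exists_mulVec_single_eq_and_vecMul_eq h₃
  have hrow : p.1.2 = (p.1.1 ⬝ᵥ p.1.2) • (Pi.single 0 1 ᵥ* A⁻¹.val) := by
    rw [← smul_vecMul, ← hA₂, vecMul_vecMul, Units.mul_inv, vecMul_one]
  refine ⟨A, Subtype.ext <| Prod.ext ?_ ?_⟩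
  · simp only [val_smul, basePoint, hA₁, normalRep_of_isNormal h₁]
  · simp only [val_smul, basePoint]
    rw [← normalRep_smul h₃, bil_eq_dotProduct, ← hrow, normalRep_of_isNormal h₂]

instance : MulAction.IsPretransitive (GL (Fin k) F) (HVtx k F) := by
  cases k with
  | zero =>
    have : IsEmpty (HVtx 0 F) := ⟨fun p => p.2.1.elim fun i _ => i.elim0⟩
    infer_instance
  | succ n => exact .of_orbit exists_smul_basePoint_eq

end HVtx

theorem Hkq_vertexTransitive_general (k : ℕ) (F : Type) [Field F] (u v : HVtx k F) :
    ∃ φ : HVtx k F ≃ HVtx k F,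
      (∀ x y : HVtx k F, HAdj x y ↔ HAdj (φ x) (φ y)) ∧ φ u = v := by
  obtain ⟨A, rfl⟩ := MulAction.exists_smul_eq (GL (Fin k) F) u v
  exact ⟨MulAction.toPerm A, fun x y => (HVtx.hAdj_smul_iff A x y).symm, rfl⟩

/-- For every positive integer `k` and prime power `q`, the digraph `H_k^q` is
vertex-transitive: any vertex can be mapped to any other by an automorphism. -/
theorem Hkq_vertexTransitive (q k : ℕ) (hq : IsPrimePow q) (hk : 0 < k)
    (F : Type) [Field F] [Fintype F] (hF : Fintype.card F = q) (u v : HVtx k F) :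
    ∃ φ : HVtx k F ≃ HVtx k F,
      (∀ x y : HVtx k F, HAdj x y ↔ HAdj (φ x) (φ y)) ∧ φ u = v :=
  Hkq_vertexTransitive_general k F u v
end

section
/- For every positive integer k and prime power q, the chromatic number of the directional complement of H_k^q is at most (q^k − 1)/(q − 1); indeed, the map sending a vertex (v,w) of H_k^q to its first component v is a proper coloring of the complement of H_k^q with at most (q^k − 1)/(q − 1) colors. -/
lemma normal_key {k : ℕ} {F : Type} [Field F] {c c' : F} (hc : c ≠ 0) (hc' : c' ≠ 0)
    {v v' : Fin k → F} (hv : IsNormal v) (hv' : IsNormal v')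
    (h : c • v = c' • v') : c = c' ∧ v = v' := by
  obtain ⟨i, hi1, hi2⟩ := hv
  obtain ⟨i', hi'1, hi'2⟩ := hv'
  have hfun : ∀ j, c * v j = c' * v' j := by
    intro j
    have := congrFun h j
    simpa [Pi.smul_apply, smul_eq_mul] using this
  have hii : i = i' := by
    rcases lt_trichotomy i i' with hlt | heq | hgt
    · exfalso
      have h2 := hfun i
      rw [hi1, hi'2 i hlt, mul_one, mul_zero] at h2
      exact hc h2
    · exact heq
    · exfalso
      have h2 := hfun i'
      rw [hi'1, hi2 i' hgt, mul_one, mul_zero] at h2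
      exact hc' h2.symm
  have hcc : c = c' := by
    have h2 := hfun i
    rw [hi1, hii, hi'1, mul_one, mul_one] at h2
    exact h2
  refine ⟨hcc, ?_⟩
  subst hcc
  exact smul_right_injective (Fin k → F) hc h

lemma normal_ne_zero {k : ℕ} {F : Type} [Field F] {v : Fin k → F} (hv : IsNormal v) :
    v ≠ 0 := by
  obtain ⟨i, hi1, -⟩ := hv
  intro h0
  rw [h0] at hi1
  simpa using hi1

/-- The map sending a vertex `(v,w)` of `H_k^q` to its first component `v` is a proper
coloring of the directional complement of `H_k^q` using at most `(q^k - 1)/(q - 1)`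
colors (the bound on the number of colors is stated multiplied through by `q - 1`);
in particular the chromatic number of the complement of `H_k^q` is at most
`(q^k - 1)/(q - 1)`. -/
theorem Hkq_compl_chromatic (q k : ℕ) (hq : IsPrimePow q) (hk : 0 < k)
    (F : Type) [Field F] [Fintype F] (hF : Fintype.card F = q) :
    (∀ a b : HVtx k F, digraphCompl HAdj a b ∨ digraphCompl HAdj b a →
      a.val.1 ≠ b.val.1) ∧
    (q - 1) * Nat.card (Set.range (fun a : HVtx k F => a.val.1)) ≤ q ^ k - 1 := by
  classical
  constructor
  · intro a b hab heq
    rcases hab with ⟨hne, hnadj⟩ | ⟨hne, hnadj⟩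
    · exact hnadj ⟨hne, heq ▸ b.property.2.2⟩
    · exact hnadj ⟨hne, heq ▸ a.property.2.2⟩
  · set S : Set (Fin k → F) := Set.range (fun a : HVtx k F => a.val.1) with hS
    have hnormal : ∀ v ∈ S, IsNormal v := by
      rintro v ⟨a, rfl⟩; exact a.property.1
    let g : Fˣ × S → {v : Fin k → F // v ≠ 0} := fun p =>
      ⟨(p.1 : F) • (p.2 : Fin k → F),
        smul_ne_zero p.1.ne_zero (normal_ne_zero (hnormal _ p.2.property))⟩
    have hg : Function.Injective g := by
      rintro ⟨c, v, hv⟩ ⟨c', v', hv'⟩ h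
      have h' : (c : F) • v = (c' : F) • v' := congrArg Subtype.val h
      obtain ⟨h1, h2⟩ := normal_key c.ne_zero c'.ne_zero (hnormal _ hv) (hnormal _ hv') h'
      exact Prod.ext (Units.ext h1) (Subtype.ext h2)
    have hcard := Nat.card_le_card_of_injective g hg
    rw [Nat.card_prod] at hcard
    have hu : Nat.card Fˣ = q - 1 := by
      rw [Nat.card_eq_fintype_card, Fintype.card_units, hF]
    have hz : Nat.card {v : Fin k → F // v ≠ 0} = q ^ k - 1 := by
      rw [Nat.card_eq_fintype_card]
      have : Fintype.card {v : Fin k → F // v ≠ 0}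
          = Fintype.card (Fin k → F) - Fintype.card {v : Fin k → F // v = 0} :=
        Fintype.card_subtype_compl _
      rw [this, Fintype.card_subtype_eq, Fintype.card_fun, Fintype.card_fin, hF]
    rw [hu, hz] at hcard
    exact hcard
end

section
/- Let q be an odd prime power and k ≥ 2 an integer. Then the clique number of H_k^q, equivalently the independence number of the directional complement of H_k^q, is at least (q² − 1)·q^{k−2}/4. -/
/-- The clique number of a digraph: the maximum size of a set of vertices such that
between any two distinct vertices of the set there are directed edges in both
directions. -/
noncomputable def cliqueNumber {V : Type*} (G : V → V → Prop) : ℕ :=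
  sSup {n | ∃ S : Set V, (∀ a ∈ S, ∀ b ∈ S, a ≠ b → G a b ∧ G b a) ∧ Nat.card S = n}

/-- The independence number of a digraph: the maximum size of a set of vertices with
no edge (in either direction) between any two of them. -/
noncomputable def indepNumber {V : Type*} (G : V → V → Prop) : ℕ :=
  sSup {n | ∃ S : Set V, (∀ a ∈ S, ∀ b ∈ S, ¬ G a b) ∧ Nat.card S = n}

section Digraph
variable {V : Type*} (G : V → V → Prop)

theorem isIndep_digraphCompl_iff {S : Set V} :
    (∀ a ∈ S, ∀ b ∈ S, ¬ digraphCompl G a b) ↔ ∀ a ∈ S, ∀ b ∈ S, a ≠ b → G a b ∧ G b a := by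
  refine ⟨fun h a ha b hb hab => ⟨?_, ?_⟩, fun h a ha b hb hG => hG.2 (h a ha b hb hG.1).1⟩
  · simpa [digraphCompl, hab] using h a ha b hb
  · simpa [digraphCompl, Ne.symm hab] using h b hb a ha

theorem indepNumber_digraphCompl : indepNumber (digraphCompl G) = cliqueNumber G := by
  simp only [indepNumber, cliqueNumber, isIndep_digraphCompl_iff]

theorem card_le_cliqueNumber [Finite V] {S : Set V}
    (hS : ∀ a ∈ S, ∀ b ∈ S, a ≠ b → G a b ∧ G b a) : Nat.card S ≤ cliqueNumber G :=
  le_csSup ⟨Nat.card V, by rintro n ⟨T, -, rfl⟩; exact Finite.card_subtype_le _⟩ ⟨S, hS, rfl⟩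

end Digraph

theorem one_add_mul_ne_zero_of_ne_neg_inv {F : Type} [Field F] {a b : F} (h : b ≠ -a⁻¹) :
    1 + a * b ≠ 0 := by
  rintro hab
  have ha : a ≠ 0 := by rintro rfl; simp at hab
  exact h (by field_simp; linear_combination hab)

theorem exists_finset_card_one_add_mul_ne_zero {F : Type} [Field F] [Fintype F] {n : ℕ}
    (hn : n ≤ Fintype.card F) :
    ∃ A B : Finset F, A.card = n ∧ B.card = Fintype.card F - n ∧
      ∀ a ∈ A, ∀ b ∈ B, 1 + a * b ≠ 0 := by
  classical
  obtain ⟨A, -, hA⟩ := Finset.exists_subset_card_eq (s := Finset.univ) (by simpa using hn)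
  have hinj : Function.Injective (fun a : F => -a⁻¹) := neg_injective.comp inv_injective
  refine ⟨A, Finset.univ \ A.image (fun a => -a⁻¹), hA, ?_, fun a ha b hb => ?_⟩
  · rw [Finset.card_sdiff_of_subset (Finset.subset_univ _), Finset.card_univ,
      Finset.card_image_of_injective _ hinj, hA]
  · refine one_add_mul_ne_zero_of_ne_neg_inv fun hb' => ?_
    exact (Finset.mem_sdiff.mp hb).2 (Finset.mem_image.mpr ⟨a, ha, hb'.symm⟩)

section Hkq
variable {F : Type} [Field F] {n : ℕ}

@[simp]
theorem bil_cons (x y : F) (v w : Fin n → F) :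
    bil (Fin.cons x v : Fin (n + 1) → F) (Fin.cons y w) = x * y + bil v w :=
  Fin.sum_univ_succ _

@[simp]
theorem bil_zero_left (w : Fin n → F) : bil 0 w = 0 := by
  simp [bil]

theorem isNormal_cons_one (v : Fin n → F) : IsNormal (Fin.cons 1 v : Fin (n + 1) → F) :=
  ⟨0, rfl, fun j hj => absurd hj (Fin.not_lt_zero j)⟩

def cliquePair (x : F × F × (Fin n → F)) : (Fin (n + 2) → F) × (Fin (n + 2) → F) :=
  (Fin.cons 1 (Fin.cons x.1 0), Fin.cons 1 (Fin.cons x.2.1 x.2.2))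

theorem bil_cliquePair (x y : F × F × (Fin n → F)) :
    bil (cliquePair x).1 (cliquePair y).2 = 1 + x.1 * y.2.1 := by
  simp [cliquePair]

theorem cliquePair_injective : Function.Injective (cliquePair (F := F) (n := n)) := by
  rintro ⟨a, b, c⟩ ⟨a', b', c'⟩ h
  simp_all [cliquePair, Fin.cons_inj]

theorem card_mul_card_mul_pow_le_cliqueNumber [Fintype F] (A B : Finset F)
    (hAB : ∀ a ∈ A, ∀ b ∈ B, 1 + a * b ≠ 0) :
    A.card * B.card * Fintype.card F ^ n ≤ cliqueNumber (HAdj (k := n + 2) (F := F)) := by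
  let D : Finset (F × F × (Fin n → F)) := A ×ˢ B ×ˢ Finset.univ
  have hD : ∀ x ∈ D, ∀ y ∈ D, bil (cliquePair x).1 (cliquePair y).2 ≠ 0 := by
    simp only [D, Finset.mem_product]
    intro x hx y hy
    rw [bil_cliquePair]
    exact hAB _ hx.1 _ hy.2.1
  let ψ : D → HVtx (n + 2) F := fun x =>
    ⟨cliquePair x.1, isNormal_cons_one _, isNormal_cons_one _, hD _ x.2 _ x.2⟩
  have hψ : Function.Injective ψ := fun x y h =>
    Subtype.ext (cliquePair_injective (congrArg Subtype.val h))
  have hclique : ∀ a ∈ Set.range ψ, ∀ b ∈ Set.range ψ, a ≠ b → HAdj a b ∧ HAdj b a := by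
    rintro _ ⟨x, rfl⟩ _ ⟨y, rfl⟩ hne
    exact ⟨⟨hne, hD _ x.2 _ y.2⟩, ⟨hne.symm, hD _ y.2 _ x.2⟩⟩
  calc A.card * B.card * Fintype.card F ^ n = Nat.card (Set.range ψ) := by
        rw [Nat.card_range_of_injective hψ, Nat.card_eq_finsetCard]
        simp [D, Finset.card_product, mul_assoc]
    _ ≤ _ := card_le_cliqueNumber _ hclique

end Hkq

theorem Hkq_cliqueNumber_lowerBound_general (q k : ℕ) (hodd : Odd q)
    (hk : 2 ≤ k) (F : Type) [Field F] [Fintype F] (hF : Fintype.card F = q) :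
    (q ^ 2 - 1) * q ^ (k - 2) ≤ 4 * cliqueNumber (HAdj (k := k) (F := F)) ∧
    (q ^ 2 - 1) * q ^ (k - 2) ≤ 4 * indepNumber (digraphCompl (HAdj (k := k) (F := F))) := by
  obtain ⟨m, rfl⟩ := hodd
  obtain ⟨n, rfl⟩ : ∃ n, k = n + 2 := ⟨k - 2, by omega⟩
  obtain ⟨A, B, hA, hB, hAB⟩ := exists_finset_card_one_add_mul_ne_zero (F := F) (n := m) (by omega)
  have hclique := card_mul_card_mul_pow_le_cliqueNumber (n := n) A B hAB
  have hsize : ((2 * m + 1) ^ 2 - 1) * (2 * m + 1) ^ (n + 2 - 2)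
      = 4 * (A.card * B.card * Fintype.card F ^ n) := by
    rw [hA, hB, hF, Nat.add_sub_cancel, show (2 * m + 1) ^ 2 = 4 * (m * (m + 1)) + 1 by ring,
      Nat.add_sub_cancel, show 2 * m + 1 - m = m + 1 by omega]
    ring
  rw [indepNumber_digraphCompl, hsize, and_self]
  exact Nat.mul_le_mul_left 4 hclique

/-- For an odd prime power `q` and `k ≥ 2`, the clique number of `H_k^q`, equivalently
the independence number of its directional complement, is at least
`(q² - 1) q^(k-2) / 4` (stated multiplied through by `4`). -/
theorem Hkq_cliqueNumber_lowerBound (q k : ℕ) (hq : IsPrimePow q) (hodd : Odd q)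
    (hk : 2 ≤ k) (F : Type) [Field F] [Fintype F] (hF : Fintype.card F = q) :
    (q ^ 2 - 1) * q ^ (k - 2) ≤ 4 * cliqueNumber (HAdj (k := k) (F := F)) ∧
    (q ^ 2 - 1) * q ^ (k - 2) ≤ 4 * indepNumber (digraphCompl (HAdj (k := k) (F := F))) :=
  Hkq_cliqueNumber_lowerBound_general q k hodd hk F hF
end

section
/- Let H be a finite vertex-transitive digraph, G a finite digraph, and suppose there exists a homomorphism from G to H. Then for every finite digraph K, |G| · N(H,K) ≤ |H| · N(G,K), where |G| denotes the number of vertices of G. -/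
/-!
Let `S` be a largest subset of `H` that maps homomorphically to `K`. Every automorphism `φ` of `H`
pulls `S` back along `φ ∘ f`, where `f : G → H`, to a subset of `G` that still maps to `K`, so it
has at most `N(G, K)` vertices. Averaging over all automorphisms, vertex-transitivity makes each
vertex of `G` land in `S` for exactly the fraction `|S| / |H|` of them, so the average pull-back has
`|G| · N(H, K) / |H|` vertices.
-/

/-- `Nhom L K` is the maximum number of vertices of an induced subdigraph `L'` of `L`
(given by a subset `S` of the vertices of `L` with the restricted adjacency) such that
there exists a homomorphism from `L'` to `K`. -/
noncomputable def Nhom {VL VK : Type*} (L : VL → VL → Prop) (K : VK → VK → Prop) : ℕ :=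
  sSup {n | ∃ S : Set VL,
    (∃ f : S → VK, ∀ x y : S, L x.val y.val → K (f x) (f y)) ∧ Nat.card S = n}

open Finset

instance RelIso.instFinite {α β : Type*} {r : α → α → Prop} {s : β → β → Prop} [Finite α]
    [Finite β] : Finite (r ≃r s) :=
  Finite.of_injective _ RelIso.toEquiv_injective

section Averaging

variable {Γ X Y : Type*} [Group Γ] [MulAction Γ X] [MulAction.IsPretransitive Γ X]
  [Fintype X] [DecidableEq X]

theorem MulAction.card_filter_smul_mem_mul_card [Fintype Γ] (S : Finset X) (w : X) :
    #{g : Γ | g • w ∈ S} * Fintype.card X = #S * Fintype.card Γ := by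
  have hconst : ∀ v : X, #{g : Γ | g • v ∈ S} = #{g : Γ | g • w ∈ S} := by
    intro v
    obtain ⟨h, rfl⟩ := MulAction.exists_smul_eq Γ w v
    exact card_equiv (Equiv.mulRight h) fun g => by simp [mul_smul]
  have hcard : ∀ g : Γ, #{v : X | g • v ∈ S} = #S := fun g =>
    card_equiv (MulAction.toPerm g) fun v => by simp
  have hsum := sum_card_bipartiteAbove_eq_sum_card_bipartiteBelow (s := univ) (t := univ)
    fun (v : X) (g : Γ) => g • v ∈ S
  simp only [bipartiteAbove, bipartiteBelow, hconst, hcard, sum_const,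
    card_univ, smul_eq_mul] at hsum
  rw [mul_comm, hsum, mul_comm]

theorem MulAction.card_mul_card_le_of_forall_card_filter_smul_mem_le [Finite Γ] [Fintype Y]
    (f : Y → X) (S : Finset X) {n : ℕ} (h : ∀ g : Γ, #{y | g • f y ∈ S} ≤ n) :
    Fintype.card Y * #S ≤ Fintype.card X * n := by
  cases nonempty_fintype Γ
  refine Nat.le_of_mul_le_mul_right ?_ (Fintype.card_pos (α := Γ))
  calc Fintype.card Y * #S * Fintype.card Γ
      = ∑ y, #{g : Γ | g • f y ∈ S} * Fintype.card X := by
        simp [card_filter_smul_mem_mul_card, mul_assoc]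
    _ = (∑ g : Γ, #{y | g • f y ∈ S}) * Fintype.card X := by
        rw [← sum_mul]
        congr 1
        exact sum_card_bipartiteAbove_eq_sum_card_bipartiteBelow (fun y (g : Γ) => g • f y ∈ S)
    _ ≤ Fintype.card Γ * n * Fintype.card X := by
        gcongr
        simpa using sum_le_card_nsmul univ _ n fun g _ => h g
    _ = Fintype.card X * n * Fintype.card Γ := by ring

end Averaging

section Nhom

variable {VL VK : Type*} [Finite VL] (L : VL → VL → Prop) (K : VK → VK → Prop)

theorem bddAbove_card_of_hom :
    BddAbove {n | ∃ S : Set VL,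
      (∃ f : S → VK, ∀ x y : S, L x.val y.val → K (f x) (f y)) ∧ Nat.card S = n} := by
  refine ⟨Nat.card VL, ?_⟩
  rintro _ ⟨S, -, rfl⟩
  exact Nat.card_le_card_of_injective _ Subtype.val_injective

theorem card_le_Nhom (S : Set VL) (f : S → VK)
    (hf : ∀ x y : S, L x.val y.val → K (f x) (f y)) : Nat.card S ≤ Nhom L K :=
  le_csSup (bddAbove_card_of_hom L K) ⟨S, ⟨f, hf⟩, rfl⟩

theorem exists_card_eq_Nhom : ∃ S : Set VL,
    (∃ f : S → VK, ∀ x y : S, L x.val y.val → K (f x) (f y)) ∧ Nat.card S = Nhom L K := by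
  refine Nat.sSup_mem ?_ (bddAbove_card_of_hom L K)
  exact ⟨0, ∅, ⟨isEmptyElim, isEmptyElim⟩, by simp⟩

end Nhom

theorem RelIso.isPretransitive_of_forall_exists {α : Type*} {r : α → α → Prop}
    (h : ∀ u v : α, ∃ φ : α ≃ α, (∀ x y : α, r x y ↔ r (φ x) (φ y)) ∧ φ u = v) :
    MulAction.IsPretransitive (r ≃r r) α :=
  ⟨fun u v => let ⟨φ, hφ, huv⟩ := h u v; ⟨⟨φ, (hφ _ _).symm⟩, huv⟩⟩

theorem card_mul_Nhom_le_of_hom_general (VG VH : Type) [Fintype VG] [Fintype VH]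
    (G : VG → VG → Prop) (H : VH → VH → Prop)
    (hvt : ∀ u v : VH, ∃ φ : VH ≃ VH, (∀ x y : VH, H x y ↔ H (φ x) (φ y)) ∧ φ u = v)
    (hhom : ∃ f : VG → VH, ∀ x y : VG, G x y → H (f x) (f y))
    (VK : Type) (K : VK → VK → Prop) :
    Fintype.card VG * Nhom H K ≤ Fintype.card VH * Nhom G K := by
  classical
  obtain ⟨f, hf⟩ := hhom
  obtain ⟨S, ⟨k, hk⟩, hS⟩ := exists_card_eq_Nhom H K
  have := RelIso.isPretransitive_of_forall_exists hvt
  rw [← hS, Nat.card_eq_card_toFinset]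
  refine MulAction.card_mul_card_le_of_forall_card_filter_smul_mem_le (Γ := H ≃r H) f
    S.toFinset fun φ => ?_
  have hpull := card_le_Nhom G K {x | φ (f x) ∈ S} (fun x => k ⟨φ (f x), x.2⟩)
    fun x y hxy => hk _ _ (φ.map_rel_iff.2 (hf _ _ hxy))
  simpa [Nat.card_eq_card_toFinset] using hpull

/-- Let `H` be a finite vertex-transitive digraph, `G` a finite digraph admitting a
homomorphism to `H`.  Then for every finite digraph `K`,
`|G| · N(H,K) ≤ |H| · N(G,K)`.  (Hell–Nešetřil, Proposition 1.22, for digraphs.) -/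
theorem card_mul_Nhom_le_of_hom (VG VH : Type) [Fintype VG] [Fintype VH]
    (G : VG → VG → Prop) (H : VH → VH → Prop)
    (hvt : ∀ u v : VH, ∃ φ : VH ≃ VH, (∀ x y : VH, H x y ↔ H (φ x) (φ y)) ∧ φ u = v)
    (hhom : ∃ f : VG → VH, ∀ x y : VG, G x y → H (f x) (f y))
    (VK : Type) [Fintype VK] (K : VK → VK → Prop) :
    Fintype.card VG * Nhom H K ≤ Fintype.card VH * Nhom G K :=
  card_mul_Nhom_le_of_hom_general VG VH G H hvt hhom VK K
end

section
/- Let q be a prime power, k and n positive integers, and G a loopless digraph on n vertices with minrank_q(G) ≤ k. Then the chromatic number of the directional complement of G satisfies χ(Ḡ) ≤ (q^k − 1)/(q − 1). Equivalently, the scalar linear index over F_q satisfies lind_q(G) ≥ log_q((q − 1)·χ(Ḡ) + 1). -/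
/-- `minrank F G` of a loopless digraph `G` on `{1,…,n}` over a field `F`: the minimum
rank of an `n × n` matrix `M` over `F` with `M i i ≠ 0` for all `i` and `M i j = 0`
whenever `i ≠ j` and `(i,j)` is not an edge of `G`. -/
noncomputable def minrank {n : ℕ} (F : Type) [Field F] (G : Fin n → Fin n → Prop) : ℕ :=
  sInf {r | ∃ M : Matrix (Fin n) (Fin n) F, (∀ i, M i i ≠ 0) ∧
    (∀ i j, i ≠ j → ¬ G i j → M i j = 0) ∧ M.rank = r}

/-!
Take a matrix `M` of rank `r = minrank_q(G) ≤ k` fitting `G`. Its rows are nonzero, so each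
vertex `i` gives a point `[Mᵢ]` of the projective space of the row space of `M`, which has
`(q^r - 1)/(q - 1)` points. If `(i, j)` is not an edge, then `Mᵢⱼ = 0 ≠ Mⱼⱼ`, so the rows `Mᵢ`
and `Mⱼ` are not proportional: `i ↦ [Mᵢ]` is a proper coloring of `Ḡ`.
-/

open Set Module
open scoped LinearAlgebra.Projectivization

structure Matrix.Fits {ι F : Type*} [Field F] (M : Matrix ι ι F) (G : ι → ι → Prop) : Prop where
  diag_ne_zero : ∀ i, M i i ≠ 0
  apply_eq_zero : ∀ i j, i ≠ j → ¬ G i j → M i j = 0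

theorem exists_fits_rank_eq_minrank {n : ℕ} (F : Type) [Field F] (G : Fin n → Fin n → Prop) :
    ∃ M : Matrix (Fin n) (Fin n) F, M.Fits G ∧ M.rank = minrank F G := by
  have hne : {r | ∃ M : Matrix (Fin n) (Fin n) F, (∀ i, M i i ≠ 0) ∧
      (∀ i j, i ≠ j → ¬ G i j → M i j = 0) ∧ M.rank = r}.Nonempty :=
    ⟨_, 1, fun i => by simp, fun i j hij _ => Matrix.one_apply_ne hij, rfl⟩
  obtain ⟨M, hdiag, hzero, hrank⟩ := Nat.sInf_mem hne
  exact ⟨M, ⟨hdiag, hzero⟩, hrank⟩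

namespace Matrix.Fits

variable {ι F : Type*} [Field F] {M : Matrix ι ι F} {G : ι → ι → Prop}

theorem row_ne_zero (hM : M.Fits G) (i : ι) : M i ≠ 0 :=
  fun h => hM.diag_ne_zero i (congrFun h i)

theorem adj_of_smul_row_eq (hM : M.Fits G) {i j : ι} (hij : i ≠ j) {a : F}
    (h : a • M i = M j) : G i j := by
  by_contra hG
  apply hM.diag_ne_zero j
  rw [← h, Pi.smul_apply, hM.apply_eq_zero i j hij hG, smul_zero]

def rowPoint (hM : M.Fits G) (i : ι) : ℙ F (Submodule.span F (range M.row)) :=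
  Projectivization.mk F ⟨M.row i, Submodule.subset_span ⟨i, rfl⟩⟩
    ((Submodule.mk_eq_zero _ _).not.mpr (hM.row_ne_zero i))

theorem adj_of_rowPoint_eq (hM : M.Fits G) {i j : ι} (hij : i ≠ j)
    (h : hM.rowPoint i = hM.rowPoint j) : G i j ∧ G j i := by
  obtain ⟨a, ha⟩ := (Projectivization.mk_eq_mk_iff' F _ _ _ _).mp h
  obtain ⟨b, hb⟩ := (Projectivization.mk_eq_mk_iff' F _ _ _ _).mp h.symm
  exact ⟨hM.adj_of_smul_row_eq hij (congrArg Subtype.val hb),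
    hM.adj_of_smul_row_eq hij.symm (congrArg Subtype.val ha)⟩

end Matrix.Fits

theorem Projectivization.card_sub_one_mul_le_pow_sub_one (F V : Type*) [Field F] [Finite F]
    [AddCommGroup V] [Module F V] [Module.Finite F V] {k : ℕ} (h : finrank F V ≤ k) :
    (Nat.card F - 1) * Nat.card (ℙ F V) ≤ Nat.card F ^ k - 1 := by
  rw [mul_comm, ← Projectivization.card F V, Module.natCard_eq_pow_finrank (K := F)]
  exact Nat.sub_le_sub_right (Nat.pow_le_pow_right Nat.card_pos h) 1

theorem exists_nat_labeling_of_finite {ι α : Type*} [Finite α] (p : ι → α) :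
    ∃ c : ι → ℕ, (∀ i j, c i = c j → p i = p j) ∧ Nat.card (range c) ≤ Nat.card α := by
  let g : α → ℕ := fun x => Finite.equivFin α x
  have hg : g.Injective := Fin.val_injective.comp (Finite.equivFin α).injective
  refine ⟨g ∘ p, fun i j h => hg h, ?_⟩
  calc Nat.card (range (g ∘ p))
      ≤ Nat.card (range g) := Nat.card_mono (finite_range g) (range_comp_subset_range p g)
    _ ≤ Nat.card α := Finite.card_range_le g

theorem chromatic_compl_le_of_minrank_le_general (q k n : ℕ)
    (F : Type) [Field F] [Fintype F] (hF : Fintype.card F = q)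
    (G : Fin n → Fin n → Prop)
    (hmr : minrank F G ≤ k) :
    ∃ c : Fin n → ℕ,
      (∀ i j : Fin n, i ≠ j → (¬ G i j ∨ ¬ G j i) → c i ≠ c j) ∧
      (q - 1) * Nat.card (Set.range c) ≤ q ^ k - 1 := by
  obtain ⟨M, hM, hrank⟩ := exists_fits_rank_eq_minrank F G
  obtain ⟨c, hc, hcard⟩ := exists_nat_labeling_of_finite hM.rowPoint
  refine ⟨c, fun i j hij hG hcij => ?_, ?_⟩
  · have hadj := hM.adj_of_rowPoint_eq hij (hc i j hcij)
    exact hG.elim (· hadj.1) (· hadj.2)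
  · have hW : finrank F (Submodule.span F (range M.row)) ≤ k := by
      rw [← M.rank_eq_finrank_span_row, hrank]
      exact hmr
    rw [← hF, Fintype.card_eq_nat_card]
    calc (Nat.card F - 1) * Nat.card (range c)
        ≤ (Nat.card F - 1) * Nat.card (ℙ F (Submodule.span F (range M.row))) := by gcongr
      _ ≤ Nat.card F ^ k - 1 := Projectivization.card_sub_one_mul_le_pow_sub_one _ _ hW

/-- Let `q` be a prime power, `k` a positive integer and `G` a loopless digraph on `n`
vertices with `minrank_q(G) ≤ k`.  Then the chromatic number of the directional
complement of `G` is at most `(q^k - 1)/(q - 1)`: there is a proper coloring `c` of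
the complement of `G` whose number of colors `N` satisfies `(q-1)·N ≤ q^k - 1`. -/
theorem chromatic_compl_le_of_minrank_le (q k n : ℕ) (hq : IsPrimePow q) (hk : 0 < k)
    (hn : 0 < n) (F : Type) [Field F] [Fintype F] (hF : Fintype.card F = q)
    (G : Fin n → Fin n → Prop) (hloopless : ∀ i, ¬ G i i)
    (hmr : minrank F G ≤ k) :
    ∃ c : Fin n → ℕ,
      (∀ i j : Fin n, i ≠ j → (¬ G i j ∨ ¬ G j i) → c i ≠ c j) ∧
      (q - 1) * Nat.card (Set.range c) ≤ q ^ k - 1 :=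
  chromatic_compl_le_of_minrank_le_general q k n F hF G hmr
end

section
/- Let q be an odd prime power and k, l integers with 1 < l < k − 1. Then N(H̄_k^q, K_l) ≥ Σ_{i=1}^{l} (q² − 1)·q^{k−1−i}/4 = (q + 1)(q^l − 1)·q^{k−l−1}/4, where H̄_k^q is the directional complement of H_k^q and K_l is the complete digraph on l vertices (edges in both directions between any two distinct vertices). Equivalently, H̄_k^q has an induced subdigraph on at least (q + 1)(q^l − 1)·q^{k−l−1}/4 vertices that is properly l-colorable. -/
/-!
For each colour `n < l` take the vertices `(v, w)` with `v = e_n + s e_{n+1}`, `s` a square, and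
`w = e_n + b e_{n+1} + (anything in the coordinates after n + 1)`, where `b = 0` or `-b` is a
nonsquare. Any two such vertices `(v, w)`, `(v', w')` of the same colour have
`⟨v, w'⟩ = 1 + s b' ≠ 0`, so each colour class is a clique of `H_k^q` in both directions and
hence independent in the complement. For odd `q` there are `(q + 1) / 2` choices of `s` and of
`b` (the quadratic character sums to zero), so class `n` has
`(q + 1)² q^(k-2-n) / 4 ≥ (q² - 1) q^(k-2-n) / 4` vertices, and the geometric sum over `n < l`
gives the bound.
-/

theorem card_le_Nhom_s14 {VL VK T : Type*} [Finite VL] {L : VL → VL → Prop} {K : VK → VK → Prop}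
    {g : T → VL} (hg : Function.Injective g) (c : T → VK)
    (hc : ∀ x y, L (g x) (g y) → K (c x) (c y)) : Nat.card T ≤ Nhom L K := by
  refine le_csSup ⟨Nat.card VL, ?_⟩ ?_
  · rintro _ ⟨S, -, rfl⟩
    exact Finite.card_subtype_le _
  · let e := Equiv.ofInjective g hg
    refine ⟨Set.range g, ⟨c ∘ e.symm, fun x y hxy => ?_⟩, (Nat.card_congr e).symm⟩
    apply hc
    simpa only [e, Equiv.apply_ofInjective_symm] using hxy

theorem card_sigma_le_Nhom_digraphCompl {V ι : Type*} {X : ι → Type*} [Finite V]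
    {G : V → V → Prop} {g : (Σ i, X i) → V} (hg : Function.Injective g)
    (hG : ∀ i (x y : X i), x ≠ y → G (g ⟨i, x⟩) (g ⟨i, y⟩)) :
    Nat.card (Σ i, X i) ≤ Nhom (digraphCompl G) (fun a b : ι => a ≠ b) := by
  refine card_le_Nhom_s14 hg Sigma.fst ?_
  rintro ⟨i, x⟩ ⟨j, y⟩ ⟨hne, hnG⟩ (rfl : i = j)
  exact hnG (hG i x y fun hxy => hne (hxy ▸ rfl))

section Squares

variable {F : Type*} [Field F] [Fintype F]

theorem FiniteField.card_isSquare_eq_card_not_isSquare_add_one (hF : ringChar F ≠ 2) :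
    Nat.card {a : F // IsSquare a} = Nat.card {a : F // ¬IsSquare a} + 1 := by
  classical
  have hχ : ∀ a : F, quadraticChar F a = (if IsSquare a then 1 else 0) -
      (if ¬IsSquare a then 1 else 0) - (if a = 0 then 1 else 0) := by
    intro a
    by_cases ha : a = 0
    · simp [ha]
    · by_cases hs : IsSquare a <;> simp [quadraticChar_apply, quadraticCharFun, ha, hs]
  have hsum := quadraticChar_sum_zero hF
  simp only [hχ, Finset.sum_sub_distrib, Finset.sum_boole] at hsum
  rw [Finset.filter_eq' Finset.univ (0 : F), if_pos (Finset.mem_univ _),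
    Finset.card_singleton, Nat.cast_one] at hsum
  simp only [Nat.card_eq_fintype_card, Fintype.card_subtype]
  omega

theorem FiniteField.two_mul_card_isSquare (hF : ringChar F ≠ 2) :
    2 * Nat.card {a : F // IsSquare a} = Nat.card F + 1 := by
  classical
  have hcompl := Fintype.card_subtype_compl (fun a : F => IsSquare a)
  have hle := Fintype.card_subtype_le (fun a : F => IsSquare a)
  have := card_isSquare_eq_card_not_isSquare_add_one hF
  simp only [Nat.card_eq_fintype_card] at this ⊢
  omega

theorem FiniteField.card_eq_zero_or_not_isSquare_neg (hF : ringChar F ≠ 2) :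
    Nat.card {b : F // b = 0 ∨ ¬IsSquare (-b)} = Nat.card {a : F // IsSquare a} := by
  classical
  have hneg : Nat.card {b : F // b = 0 ∨ ¬IsSquare (-b)} =
      Nat.card {c : F // c = 0 ∨ ¬IsSquare c} :=
    Nat.card_congr ((Equiv.neg F).subtypeEquiv fun b => by simp)
  rw [hneg, card_isSquare_eq_card_not_isSquare_add_one hF]
  simp only [Nat.card_eq_fintype_card, Fintype.card_subtype, Finset.filter_or]
  rw [Finset.card_union_of_disjoint, Finset.filter_eq' _ (0 : F), if_pos (Finset.mem_univ _),
    Finset.card_singleton, add_comm]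
  exact Finset.disjoint_filter.mpr fun a _ ha => by simp [ha]

end Squares

theorem one_add_mul_ne_zero_of_isSquare {F : Type*} [Field F] {s b : F} (hs : IsSquare s)
    (hb : b = 0 ∨ ¬IsSquare (-b)) : 1 + s * b ≠ 0 := by
  intro h
  obtain ⟨r, rfl⟩ := hs
  rcases hb with rfl | hb
  · simp at h
  · have hr : r ≠ 0 := by rintro rfl; simp at h
    exact hb ⟨r⁻¹, by field_simp; linear_combination -h⟩

theorem sq_sub_one_mul_sum_range_pow {q l k : ℕ} (hq : 1 ≤ q) (hlk : l < k) :
    (q ^ 2 - 1) * ∑ i ∈ Finset.range l, q ^ (k - 2 - i) =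
      (q + 1) * (q ^ l - 1) * q ^ (k - l - 1) := by
  obtain ⟨m, rfl⟩ := Nat.exists_eq_add_of_lt hlk
  have hrefl : ∑ i ∈ Finset.range l, q ^ (l + m + 1 - 2 - i) =
      q ^ m * ∑ j ∈ Finset.range l, q ^ j := by
    rw [Finset.mul_sum, ← Finset.sum_range_reflect]
    refine Finset.sum_congr rfl fun i hi => ?_
    rw [← pow_add]
    congr 1
    have := Finset.mem_range.mp hi
    omega
  have hsq : q ^ 2 - 1 = (q + 1) * (q - 1) := by simpa using Nat.sq_sub_sq q 1
  rw [hrefl, show l + m + 1 - l - 1 = m by omega, hsq, ← geom_sum_mul_of_one_le hq l]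
  ring

section BasisPairVec

variable {k : ℕ} {F : Type} [Field F]

def basisPairVec (n : ℕ) (s : F) : Fin k → F :=
  fun j => if (j : ℕ) = n then 1 else if (j : ℕ) = n + 1 then s else 0

def basisPairTailVec (n : ℕ) (b : F) (t : Fin (k - 2 - n) → F) : Fin k → F :=
  fun j => if h : n + 2 ≤ (j : ℕ) then t ⟨j - (n + 2), by omega⟩ else basisPairVec n b j

theorem basisPairVec_apply_self {n : ℕ} (hn : n < k) (s : F) :
    basisPairVec n s ⟨n, hn⟩ = 1 := by
  simp [basisPairVec]

theorem basisPairVec_apply_succ {n : ℕ} (hn : n + 1 < k) (s : F) :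
    basisPairVec n s ⟨n + 1, hn⟩ = s := by
  simp [basisPairVec]

theorem basisPairVec_apply_of_lt {n : ℕ} (s : F) {j : Fin k} (hj : (j : ℕ) < n) :
    basisPairVec n s j = 0 := by
  simp [basisPairVec, hj.ne, show (j : ℕ) ≠ n + 1 by omega]

theorem isNormal_basisPairVec {n : ℕ} (hn : n < k) (s : F) :
    IsNormal (basisPairVec n s : Fin k → F) :=
  ⟨⟨n, hn⟩, basisPairVec_apply_self hn s, fun _ hj => basisPairVec_apply_of_lt s hj⟩

theorem bil_basisPairVec {n : ℕ} (hn : n + 1 < k) (s : F) (w : Fin k → F) :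
    bil (basisPairVec n s) w = w ⟨n, by omega⟩ + s * w ⟨n + 1, hn⟩ := by
  have hne : (⟨n, by omega⟩ : Fin k) ≠ ⟨n + 1, hn⟩ := by simp
  rw [bil, ← Finset.sum_subset (Finset.subset_univ {⟨n, by omega⟩, ⟨n + 1, hn⟩}),
    Finset.sum_pair hne, basisPairVec_apply_self, basisPairVec_apply_succ, one_mul]
  intro j _ hj
  simp only [Finset.mem_insert, Finset.mem_singleton, Fin.ext_iff, not_or] at hj
  simp [basisPairVec, hj.1, hj.2]

theorem le_of_basisPairVec_eq {n n' : ℕ} (hn : n < k) {s s' : F}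
    (h : basisPairVec n s = (basisPairVec n' s' : Fin k → F)) : n' ≤ n := by
  by_contra! hlt
  have h1 := congrFun h ⟨n, hn⟩
  rw [basisPairVec_apply_self, basisPairVec_apply_of_lt s' (by exact hlt)] at h1
  exact one_ne_zero h1

theorem basisPairVec_inj {n n' : ℕ} (hn : n + 1 < k) (hn' : n' + 1 < k) {s s' : F}
    (h : basisPairVec n s = (basisPairVec n' s' : Fin k → F)) : n = n' ∧ s = s' := by
  obtain rfl : n = n' :=
    le_antisymm (le_of_basisPairVec_eq (by omega) h.symm) (le_of_basisPairVec_eq (by omega) h)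
  refine ⟨rfl, ?_⟩
  simpa only [basisPairVec_apply_succ] using congrFun h ⟨n + 1, hn⟩

theorem basisPairTailVec_apply_of_lt {n : ℕ} (b : F) (t : Fin (k - 2 - n) → F) {j : Fin k}
    (hj : (j : ℕ) < n + 2) : basisPairTailVec n b t j = basisPairVec n b j :=
  dif_neg (by omega)

theorem basisPairTailVec_apply_add {n m : ℕ} (hm : n + 2 + m < k) (b : F)
    (t : Fin (k - 2 - n) → F) :
    basisPairTailVec n b t ⟨n + 2 + m, hm⟩ = t ⟨m, by omega⟩ := by
  simp [basisPairTailVec]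

theorem isNormal_basisPairTailVec {n : ℕ} (hn : n < k) (b : F) (t : Fin (k - 2 - n) → F) :
    IsNormal (basisPairTailVec n b t) := by
  refine ⟨⟨n, hn⟩, ?_, fun j hj => ?_⟩
  · rw [basisPairTailVec_apply_of_lt b t (by simp), basisPairVec_apply_self]
  · have hj : (j : ℕ) < n := hj
    rw [basisPairTailVec_apply_of_lt b t (by omega), basisPairVec_apply_of_lt b hj]

theorem bil_basisPairVec_basisPairTailVec {n : ℕ} (hn : n + 2 ≤ k) (s b : F)
    (t : Fin (k - 2 - n) → F) : bil (basisPairVec n s) (basisPairTailVec n b t) = 1 + s * b := by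
  rw [bil_basisPairVec (by omega), basisPairTailVec_apply_of_lt b t (by simp),
    basisPairTailVec_apply_of_lt b t (by simp), basisPairVec_apply_self, basisPairVec_apply_succ]

theorem basisPairTailVec_inj {n : ℕ} {b b' : F} {t t' : Fin (k - 2 - n) → F} (hn : n + 2 ≤ k)
    (h : basisPairTailVec n b t = basisPairTailVec n b' t') : b = b' ∧ t = t' := by
  refine ⟨?_, funext fun m => ?_⟩
  · have h1 := congrFun h ⟨n + 1, by omega⟩
    rwa [basisPairTailVec_apply_of_lt b t (by simp), basisPairTailVec_apply_of_lt b' t' (by simp),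
      basisPairVec_apply_succ, basisPairVec_apply_succ] at h1
  · have h1 := congrFun h ⟨n + 2 + m, by omega⟩
    rwa [basisPairTailVec_apply_add, basisPairTailVec_apply_add] at h1

end BasisPairVec

section Clique

variable (k l : ℕ) (F : Type) [Field F]

abbrev CliqueFiber (n : ℕ) : Type :=
  {s : F // IsSquare s} × {b : F // b = 0 ∨ ¬IsSquare (-b)} × (Fin (k - 2 - n) → F)

abbrev CliqueIndex : Type := Σ i : Fin l, CliqueFiber k F i

variable {k l F}

def cliqueVertex (hlk : l < k) (x : CliqueIndex k l F) : HVtx k F :=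
  have hx : (x.1 : ℕ) + 2 ≤ k := by have := x.1.isLt; omega
  ⟨(basisPairVec x.1 x.2.1, basisPairTailVec x.1 x.2.2.1 x.2.2.2),
    isNormal_basisPairVec (by omega) _, isNormal_basisPairTailVec (by omega) _ _, by
      rw [bil_basisPairVec_basisPairTailVec hx]
      exact one_add_mul_ne_zero_of_isSquare x.2.1.2 x.2.2.1.2⟩

theorem cliqueVertex_injective (hlk : l < k) :
    Function.Injective (cliqueVertex (F := F) hlk) := by
  rintro ⟨i, s, b, t⟩ ⟨i', s', b', t'⟩ h
  obtain ⟨hv, hw⟩ := Prod.ext_iff.mp (congrArg Subtype.val h)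
  obtain ⟨hii, hss⟩ := basisPairVec_inj (by omega) (by omega) hv
  obtain rfl : i = i' := Fin.ext hii
  obtain rfl : s = s' := Subtype.ext hss
  obtain ⟨hbb, rfl⟩ := basisPairTailVec_inj (by omega) hw
  obtain rfl : b = b' := Subtype.ext hbb
  rfl

theorem hAdj_cliqueVertex (hlk : l < k) (i : Fin l)
    {x y : CliqueFiber k F i} (hxy : x ≠ y) :
    HAdj (cliqueVertex hlk ⟨i, x⟩) (cliqueVertex hlk ⟨i, y⟩) := by
  refine ⟨(cliqueVertex_injective hlk).ne (by simpa using hxy), ?_⟩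
  change bil (basisPairVec i x.1.val) (basisPairTailVec i y.2.1.val y.2.2) ≠ 0
  rw [bil_basisPairVec_basisPairTailVec (by omega)]
  exact one_add_mul_ne_zero_of_isSquare x.1.2 y.2.1.2

theorem four_mul_card_cliqueIndex [Fintype F] (hF : ringChar F ≠ 2) :
    4 * Nat.card (CliqueIndex k l F) =
      (Nat.card F + 1) ^ 2 * ∑ i ∈ Finset.range l, Nat.card F ^ (k - 2 - i) := by
  rw [Nat.card_sigma, Fin.sum_univ_eq_sum_range (fun i => Nat.card (CliqueFiber k F i)),
    Finset.mul_sum, Finset.mul_sum]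
  refine Finset.sum_congr rfl fun i _ => ?_
  rw [Nat.card_prod, Nat.card_prod, Nat.card_fun, Nat.card_fin,
    FiniteField.card_eq_zero_or_not_isSquare_neg hF, ← FiniteField.two_mul_card_isSquare hF]
  ring

end Clique

theorem Nhom_Hkq_compl_Kl_lowerBound_general (q k l : ℕ) (hodd : Odd q)
    (hlk : l < k - 1)
    (F : Type) [Field F] [Fintype F] (hF : Fintype.card F = q) :
    (∑ i ∈ Finset.Icc 1 l, (q ^ 2 - 1) * q ^ (k - 1 - i))
        = (q + 1) * (q ^ l - 1) * q ^ (k - l - 1) ∧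
    (q + 1) * (q ^ l - 1) * q ^ (k - l - 1)
        ≤ 4 * Nhom (digraphCompl (HAdj (k := k) (F := F)))
            (fun a b : Fin l => a ≠ b) := by
  have hq : 1 ≤ q := hodd.pos
  have hlk' : l < k := by omega
  have hgeom := sq_sub_one_mul_sum_range_pow hq hlk'
  have hshift : ∑ i ∈ Finset.Icc 1 l, (q ^ 2 - 1) * q ^ (k - 1 - i)
      = (q ^ 2 - 1) * ∑ i ∈ Finset.range l, q ^ (k - 2 - i) := by
    rw [← Finset.Ico_add_one_right_eq_Icc, Finset.sum_Ico_eq_sum_range, Finset.mul_sum,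
      Nat.add_sub_cancel]
    exact Finset.sum_congr rfl fun i _ => by rw [show k - 1 - (1 + i) = k - 2 - i by omega]
  refine ⟨hshift.trans hgeom, ?_⟩
  have hchar : ringChar F ≠ 2 := by
    rw [Ne, FiniteField.even_card_iff_char_two, hF, Nat.odd_iff.mp hodd]
    decide
  calc (q + 1) * (q ^ l - 1) * q ^ (k - l - 1)
      = (q ^ 2 - 1) * ∑ i ∈ Finset.range l, q ^ (k - 2 - i) := hgeom.symm
    _ ≤ (q + 1) ^ 2 * ∑ i ∈ Finset.range l, q ^ (k - 2 - i) := by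
        gcongr
        exact Nat.sub_le_of_le_add (by nlinarith)
    _ = 4 * Nat.card (CliqueIndex k l F) := by
        rw [four_mul_card_cliqueIndex hchar, Nat.card_eq_fintype_card, hF]
    _ ≤ 4 * Nhom (digraphCompl (HAdj (k := k) (F := F))) (fun a b : Fin l => a ≠ b) := by
        gcongr
        exact card_sigma_le_Nhom_digraphCompl (cliqueVertex_injective hlk')
          fun i _ _ hxy => hAdj_cliqueVertex hlk' i hxy

/-- Let `q` be an odd prime power and `1 < l < k - 1`.  Then
`N(H̄_k^q, K_l) ≥ ∑_{i=1}^{l} (q² - 1) q^(k-1-i) / 4 = (q+1)(q^l - 1) q^(k-l-1) / 4`,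
where `K_l` is the complete digraph on `l` vertices (both claims stated multiplied
through by `4`);  i.e., `H̄_k^q` has an induced subdigraph on at least that many
vertices admitting a homomorphism to `K_l` (equivalently, properly `l`-colorable). -/
theorem Nhom_Hkq_compl_Kl_lowerBound (q k l : ℕ) (hq : IsPrimePow q) (hodd : Odd q)
    (hl : 1 < l) (hlk : l < k - 1)
    (F : Type) [Field F] [Fintype F] (hF : Fintype.card F = q) :
    (∑ i ∈ Finset.Icc 1 l, (q ^ 2 - 1) * q ^ (k - 1 - i))
        = (q + 1) * (q ^ l - 1) * q ^ (k - l - 1) ∧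
    (q + 1) * (q ^ l - 1) * q ^ (k - l - 1)
        ≤ 4 * Nhom (digraphCompl (HAdj (k := k) (F := F)))
            (fun a b : Fin l => a ≠ b) :=
  Nhom_Hkq_compl_Kl_lowerBound_general q k l hodd hlk F hF
end
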